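/- For the Douglas–Rachford operator T, the orthogonal projection onto Fix T satisfies P_{Fix T} = P_{U∩V} + P_{U^⊥ ∩ V^⊥}, and moreover P_{Fix T} T = T P_{Fix T} = P_{Fix T}. -/

import Mathlib

noncomputable section

variable {X : Type*} [NormedAddCommGroup X] [InnerProductSpace ℝ X] [CompleteSpace X]

/-- The orthogonal projection onto a closed subspace `W`, as an operator on `X`. -/
noncomputable def proj (W : Submodule ℝ X) [Submodule.HasOrthogonalProjection W] : X →L[ℝ] X :=
  W.subtypeL.comp (Submodule.orthogonalProjectionOnto W)

instance infHOP (U V : Submodule ℝ X) [CompleteSpace U] [CompleteSpace V] :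
    Submodule.HasOrthogonalProjection (U ⊓ V) := by
  have hU : IsClosed (U : Set X) := (completeSpace_coe_iff_isComplete.mp ‹_›).isClosed
  have hV : IsClosed (V : Set X) := (completeSpace_coe_iff_isComplete.mp ‹_›).isClosed
  have : CompleteSpace (U ⊓ V : Submodule ℝ X) := (hU.inter hV).completeSpace_coe
  infer_instance

/-- The fixed point set `Fix T = {x | T x = x}` of a continuous linear operator `T`,
as a submodule of `X`. -/
noncomputable def fixedSpace (T : X →L[ℝ] X) : Submodule ℝ X := LinearMap.ker ((T - 1 : X →L[ℝ] X) : X →ₗ[ℝ] X)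

instance fixedSpaceHOP (T : X →L[ℝ] X) : Submodule.HasOrthogonalProjection (fixedSpace T) := by
  have h : IsClosed ((fixedSpace T : Submodule ℝ X) : Set X) := by
    have : ((fixedSpace T : Submodule ℝ X) : Set X) = {x | T x = x} := by
      ext x; simp [fixedSpace, LinearMap.mem_ker, sub_eq_zero]
    rw [this]
    exact isClosed_eq T.continuous continuous_id
  have : CompleteSpace (fixedSpace T) := h.completeSpace_coe
  infer_instance

/-- The reflector `R_W = 2 P_W − Id` associated with `W`. -/
noncomputable def reflector (W : Submodule ℝ X) [Submodule.HasOrthogonalProjection W] : X →L[ℝ] X :=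
  2 • proj W - 1

/-- The Douglas–Rachford operator `T = T_{V,U} = P_V (2 P_U − Id) + Id − P_U`.
(The first argument is `U`, the second is `V`.) -/
noncomputable def drOperator (U V : Submodule ℝ X) [Submodule.HasOrthogonalProjection U]
    [Submodule.HasOrthogonalProjection V] : X →L[ℝ] X :=
  proj V * (2 • proj U - 1) + 1 - proj U

/-- The cosine of the Friedrichs angle between `U` and `V`. -/
noncomputable def friedrichs (U V : Submodule ℝ X) : ℝ :=
  sSup {c : ℝ | ∃ u v : X, u ∈ U ⊓ (U ⊓ V)ᗮ ∧ v ∈ V ⊓ (U ⊓ V)ᗮ ∧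
    ‖u‖ ≤ 1 ∧ ‖v‖ ≤ 1 ∧ c = inner ℝ u v}

/-! If `T x = x` and `u = P_U x`, then `P_V (u - (x - u)) = u`; the vector `P_V u - u ∈ Vᗮ` equals
`P_V (x - u) ∈ V`, so both vanish and `x = u + (x - u)` with `u ∈ U ⊓ V`, `x - u ∈ Uᗮ ⊓ Vᗮ`.
Hence `Fix T` is the orthogonal sum of `U ⊓ V` and `Uᗮ ⊓ Vᗮ`, which gives the projection formula.
Each summand projection `P_W` absorbs or annihilates both `P_U` and `P_V`, so `P_W T = P_W`. -/

namespace Submodule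

variable {𝕜 E : Type*} [RCLike 𝕜] [NormedAddCommGroup E] [InnerProductSpace 𝕜 E]

theorem starProjection_eq_add_of_eq_sup_of_isOrtho {W A B : Submodule 𝕜 E}
    [W.HasOrthogonalProjection] [A.HasOrthogonalProjection] [B.HasOrthogonalProjection]
    (hW : W = A ⊔ B) (hAB : A ⟂ B) :
    W.starProjection = A.starProjection + B.starProjection := by
  subst hW
  ext x
  refine eq_starProjection_of_mem_of_inner_eq_zero
    (add_mem_sup (starProjection_apply_mem A x) (starProjection_apply_mem B x)) ?_
  intro w hw
  obtain ⟨a, ha, b, hb, rfl⟩ := mem_sup.mp hw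
  have hxa : inner 𝕜 (x - A.starProjection x) a = 0 := starProjection_inner_eq_zero x a ha
  have hxb : inner 𝕜 (x - B.starProjection x) b = 0 := starProjection_inner_eq_zero x b hb
  have hba : inner 𝕜 (B.starProjection x) a = 0 :=
    hAB.symm.inner_eq (starProjection_apply_mem B x) ha
  have hab : inner 𝕜 (A.starProjection x) b = 0 := hAB.inner_eq (starProjection_apply_mem A x) hb
  calc inner 𝕜 (x - (A.starProjection x + B.starProjection x)) (a + b)
      = inner 𝕜 (x - A.starProjection x) a - inner 𝕜 (B.starProjection x) a
        + (inner 𝕜 (x - B.starProjection x) b - inner 𝕜 (A.starProjection x) b) := by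
        simp only [inner_add_right, inner_sub_left, inner_add_left]; ring
    _ = 0 := by rw [hxa, hxb, hba, hab]; ring

theorem mem_and_mem_orthogonal_of_starProjection_sub_eq {K : Submodule 𝕜 E}
    [K.HasOrthogonalProjection] {a b : E} (h : K.starProjection (a - b) = a) :
    a ∈ K ∧ b ∈ Kᗮ := by
  have hba : K.starProjection b = K.starProjection a - a := by
    rw [map_sub] at h; nth_rw 2 [← h]; abel
  have hb : K.starProjection b = 0 := by
    have hmem : K.starProjection b ∈ K ⊓ Kᗮ := by
      refine mem_inf.mpr ⟨starProjection_apply_mem K b, ?_⟩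
      rw [hba, ← neg_sub, neg_mem_iff]
      exact sub_starProjection_mem_orthogonal a
    rwa [inf_orthogonal_eq_bot, mem_bot] at hmem
  refine ⟨starProjection_eq_self_iff.mp ?_, (starProjection_apply_eq_zero_iff K).mp hb⟩
  rw [← sub_eq_zero, ← hba, hb]

end Submodule

section

variable {E : Type*} [NormedAddCommGroup E] [InnerProductSpace ℝ E]

lemma proj_eq_starProjection (W : Submodule ℝ E) [W.HasOrthogonalProjection] :
    proj W = W.starProjection := rfl

lemma mem_fixedSpace {T : E →L[ℝ] E} {x : E} : x ∈ fixedSpace T ↔ T x = x := by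
  simp [fixedSpace, sub_eq_zero]

lemma mul_proj_fixedSpace [CompleteSpace E] (T : E →L[ℝ] E) :
    T * proj (fixedSpace T) = proj (fixedSpace T) := by
  ext x
  exact mem_fixedSpace.mp (Submodule.starProjection_apply_mem _ x)

variable (U V : Submodule ℝ E) [U.HasOrthogonalProjection] [V.HasOrthogonalProjection]

lemma drOperator_apply (x : E) :
    drOperator U V x = proj V (2 • proj U x - x) + x - proj U x := by
  simp [drOperator]

lemma fixedSpace_drOperator : fixedSpace (drOperator U V) = U ⊓ V ⊔ Uᗮ ⊓ Vᗮ := by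
  apply le_antisymm
  · intro x hx
    set u := U.starProjection x
    have hPV : V.starProjection (u - (x - u)) = u := by
      have hTx := mem_fixedSpace.mp hx
      rw [drOperator_apply, proj_eq_starProjection, proj_eq_starProjection] at hTx
      rw [show u - (x - u) = 2 • u - x by rw [two_smul]; abel]
      rwa [add_sub_right_comm, add_eq_right, sub_eq_zero] at hTx
    obtain ⟨huV, hwV⟩ := Submodule.mem_and_mem_orthogonal_of_starProjection_sub_eq hPV
    exact Submodule.mem_sup.mpr ⟨u, ⟨U.starProjection_apply_mem x, huV⟩,
      x - u, ⟨U.sub_starProjection_mem_orthogonal x, hwV⟩, add_sub_cancel u x⟩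
  · refine sup_le (fun a ha => ?_) (fun b hb => ?_) <;>
      simp only [mem_fixedSpace, drOperator_apply, proj_eq_starProjection]
    · rw [Submodule.starProjection_eq_self_iff.mpr ha.1, two_smul, add_sub_cancel_right,
        add_sub_cancel_right, Submodule.starProjection_eq_self_iff.mpr ha.2]
    · rw [(Submodule.starProjection_apply_eq_zero_iff U).mpr hb.1, smul_zero, zero_sub, map_neg,
        (Submodule.starProjection_apply_eq_zero_iff V).mpr hb.2, neg_zero, zero_add, sub_zero]

variable {U V} {W : Submodule ℝ E} [W.HasOrthogonalProjection]

lemma proj_mul_drOperator_of_le (hU : W ≤ U) (hV : W ≤ V) :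
    proj W * drOperator U V = proj W := by
  have hWU : proj W * proj U = proj W := Submodule.starProjection_comp_starProjection_of_le hU
  have hWV : proj W * proj V = proj W := Submodule.starProjection_comp_starProjection_of_le hV
  simp only [drOperator, mul_add, mul_sub, ← mul_assoc, hWV, mul_smul_comm, mul_one, hWU]
  abel

lemma proj_mul_drOperator_of_le_orthogonal (hU : W ≤ Uᗮ) (hV : W ≤ Vᗮ) :
    proj W * drOperator U V = proj W := by
  have hWU : proj W * proj U = 0 :=
    (Submodule.isOrtho_iff_le.mpr hU).starProjection_comp_starProjection
  have hWV : proj W * proj V = 0 :=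
    (Submodule.isOrtho_iff_le.mpr hV).starProjection_comp_starProjection
  simp only [drOperator, mul_add, mul_sub, ← mul_assoc, hWV, zero_mul, mul_one, hWU]
  abel

end

/-- `P_{Fix T} = P_{U∩V} + P_{U^⊥ ∩ V^⊥}` and
`P_{Fix T} T = T P_{Fix T} = P_{Fix T}`. -/
theorem proj_fixedSpace_drOperator
    (U V : Submodule ℝ X) [CompleteSpace U] [CompleteSpace V] :
    proj (fixedSpace (drOperator U V)) = proj (U ⊓ V) + proj (Uᗮ ⊓ Vᗮ) ∧
    proj (fixedSpace (drOperator U V)) * drOperator U V = proj (fixedSpace (drOperator U V)) ∧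
    drOperator U V * proj (fixedSpace (drOperator U V)) = proj (fixedSpace (drOperator U V)) := by
  have hsum : proj (fixedSpace (drOperator U V)) = proj (U ⊓ V) + proj (Uᗮ ⊓ Vᗮ) :=
    Submodule.starProjection_eq_add_of_eq_sup_of_isOrtho (fixedSpace_drOperator U V)
      ((Submodule.isOrtho_orthogonal_right U).mono inf_le_left inf_le_left)
  refine ⟨hsum, ?_, mul_proj_fixedSpace _⟩
  rw [hsum, add_mul, proj_mul_drOperator_of_le inf_le_left inf_le_right,
    proj_mul_drOperator_of_le_orthogonal inf_le_left inf_le_right]
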